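/- If M is a nonzero co-Kasch right R-module, then Rad(M) ≠ M; equivalently, M has a maximal submodule. -/
import Mathlib


def IsCoKasch (R : Type*) [Ring R] (M : Type*) [AddCommGroup M] [Module R M] : Prop :=
  ∀ (K : Submodule R M) (S : Submodule R (M ⧸ K)), IsSimpleModule R S →
    ∃ f : M →ₗ[R] S, Function.Surjective f

/-- A nonzero co-Kasch module has `Rad(M) ≠ M`; equivalently, it has a
maximal submodule. -/
theorem stmt7 (R : Type u) [Ring R] (M : Type u) [AddCommGroup M] [Module R M]
    [Nontrivial M] (hM : IsCoKasch R M) :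
    sInf {N : Submodule R M | IsCoatom N} ≠ ⊤ ∧ ∃ N : Submodule R M, IsCoatom N := by
  obtain ⟨x, hx⟩ := exists_ne (0 : M)
  set N : Submodule R M := Submodule.span R {x} with hN
  have hcomp := CompleteLattice.Iic_coatomic_of_compact_element
    (Submodule.singleton_span_isCompactElement (R := R) x)
  obtain h1 | ⟨⟨K, hKN⟩, hKco, -⟩ := hcomp.eq_top_or_exists_le_coatom ⟨⊥, Set.mem_Iic.mpr bot_le⟩
  · exfalso
    apply hx
    have : (⊥ : Submodule R M) = N := congrArg Subtype.val h1
    have hxN : x ∈ N := Submodule.mem_span_singleton_self x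
    rw [← this] at hxN
    simpa using hxN
  · -- K ⋖ N
    have hcov : K ⋖ N := (covBy_iff_coatom_Iic hKN).mpr hKco
    have hsimp : IsSimpleModule R (N ⧸ Submodule.comap N.subtype K) :=
      (covBy_iff_quot_is_simple hKN).mp hcov
    -- build simple submodule of M ⧸ K
    let g : N →ₗ[R] M ⧸ K := K.mkQ.comp N.subtype
    have hker : LinearMap.ker g = Submodule.comap N.subtype K := by
      ext y; simp [g, Submodule.Quotient.mk_eq_zero]
    have hSsimp : IsSimpleModule R (LinearMap.range g) := by
      have e : (N ⧸ LinearMap.ker g) ≃ₗ[R] LinearMap.range g := g.quotKerEquivRange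
      rw [hker] at e
      exact IsSimpleModule.congr e.symm
    obtain ⟨f, hf⟩ := hM K (LinearMap.range g) hSsimp
    have hco : IsCoatom (LinearMap.ker f) := LinearMap.isCoatom_ker_of_surjective hf
    refine ⟨?_, ⟨_, hco⟩⟩
    intro htop
    have := (sInf_le (show LinearMap.ker f ∈ {N : Submodule R M | IsCoatom N} from hco)).trans_lt
      (lt_top_iff_ne_top.mpr hco.1)
    rw [htop] at this
    exact absurd this (lt_irrefl _)
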